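/- arXiv:1106.3594 — 5 statements merged into one kernel-verified Lean document; each statement's English description precedes it below -/
import Mathlib

section
/- Let $X$ be a finite set, $A \subseteq X$, and $\mu$ a probability measure on $X$. Suppose there are positive reals $p, q$ and a map $T \colon A \to \mathcal{P}(X)$ such that $\mu(T(a)) \geq q \cdot \mu(\{a\})$ for every $a \in A$, and $|\{b \in A : x \in T(b)\}| \leq p$ for every $x \in X$. Then $\mu(A) \leq p/q$. -/
/-- the expanding-transformation lemma (Lemma 2.2). -/
theorem double_counting {X : Type*} [Fintype X] [DecidableEq X] (μ : X → ℝ)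
    (hμ0 : ∀ x, 0 ≤ μ x) (hμ1 : ∑ x, μ x = 1)
    (A : Finset X) (T : X → Finset X) (p q : ℝ) (hp : 0 < p) (hq : 0 < q)
    (hT : ∀ a ∈ A, q * μ a ≤ ∑ x ∈ T a, μ x)
    (hcount : ∀ x : X, ((A.filter (fun b => x ∈ T b)).card : ℝ) ≤ p) :
    ∑ a ∈ A, μ a ≤ p / q := by
  rw [le_div_iff₀ hq]
  have key : q * ∑ a ∈ A, μ a ≤ ∑ a ∈ A, ∑ x ∈ T a, μ x := by
    rw [Finset.mul_sum]
    exact Finset.sum_le_sum hT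
  have swap : ∑ a ∈ A, ∑ x ∈ T a, μ x
      = ∑ x : X, ((A.filter (fun b => x ∈ T b)).card : ℝ) * μ x := by
    have : ∀ a ∈ A, ∑ x ∈ T a, μ x = ∑ x : X, if x ∈ T a then μ x else 0 := by
      intro a _
      rw [Finset.sum_ite_mem, Finset.univ_inter]
    rw [Finset.sum_congr rfl this, Finset.sum_comm]
    refine Finset.sum_congr rfl fun x _ => ?_
    rw [Finset.sum_ite, Finset.sum_const_zero, add_zero, Finset.sum_const, nsmul_eq_mul]
  have bound : ∑ x : X, ((A.filter (fun b => x ∈ T b)).card : ℝ) * μ x ≤ p := by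
    calc ∑ x : X, ((A.filter (fun b => x ∈ T b)).card : ℝ) * μ x
        ≤ ∑ x : X, p * μ x :=
          Finset.sum_le_sum fun x _ => mul_le_mul_of_nonneg_right (hcount x) (hμ0 x)
      _ = p := by rw [← Finset.mul_sum, hμ1, mul_one]
  linarith [key, swap ▸ key]
end

section
/- Let $\Gamma$ be a minimal edge cutset in $\mathbb{Z}^d$ separating the two components $A_0$ and $A_1$ (so $A_0, A_1$ partition the vertex set, each edge of $\Gamma$ has one endpoint in each, and no edge outside $\Gamma$ crosses between them). If $\{v, w\}$ is an edge of $\Gamma$ with $v \in A_1$, $w \in A_0$, and the cutset satisfies the 'odd cutset' property that for every $u \in A_1$ incident to an edge of $\Gamma$ and every neighbor $u + f$ of $u$ lying in $A_1$, all neighbors of $u+f$ lie in $A_1$, then $P_\Gamma(v) + P_\Gamma(w) \geq 2d$, where $P_\Gamma(u)$ denotes the number of edges of $\Gamma$ incident to $u$. -/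
/-- Nearest-neighbor adjacency in `ℤ^d`. -/
def latAdj (d : ℕ) (v w : Fin d → ℤ) : Prop := ∑ i, |v i - w i| = 1

def dirv (d : ℕ) (p : Fin d × Bool) : Fin d → ℤ :=
  fun j => if j = p.1 then (if p.2 then 1 else -1) else 0

lemma dirv_self (d : ℕ) (p : Fin d × Bool) : dirv d p p.1 = if p.2 then 1 else -1 := by
  simp [dirv]

lemma abs_dirv (d : ℕ) (p : Fin d × Bool) (j : Fin d) :
    |dirv d p j| = if j = p.1 then 1 else 0 := by
  unfold dirv; split <;> cases p.2 <;> simp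

lemma latAdj_add_dirv (d : ℕ) (a : Fin d → ℤ) (p : Fin d × Bool) :
    latAdj d a (a + dirv d p) := by
  unfold latAdj
  have h : ∀ i, |a i - (a + dirv d p) i| = if i = p.1 then 1 else 0 := by
    intro i
    have h2 : a i - (a + dirv d p) i = -(dirv d p i) := by simp
    rw [h2, abs_neg, abs_dirv]
  simp_rw [h]
  simp

lemma latAdj_symm {d : ℕ} {a b : Fin d → ℤ} (h : latAdj d a b) : latAdj d b a := by
  unfold latAdj at *
  simpa [abs_sub_comm] using h

lemma latAdj_translate {d : ℕ} {a b : Fin d → ℤ} (c : Fin d → ℤ) (h : latAdj d a b) :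
    latAdj d (a + c) (b + c) := by
  unfold latAdj at *
  convert h using 2 with i
  simp

lemma add_dirv_ne (d : ℕ) (a : Fin d → ℤ) (p : Fin d × Bool) : a + dirv d p ≠ a := by
  intro h
  have h1 := congrFun h p.1
  simp only [Pi.add_apply, dirv_self] at h1
  cases p.2 <;> simp_all <;> omega

lemma dirv_injective (d : ℕ) : Function.Injective (dirv d) := by
  intro p q h
  have h1 := congrFun h p.1
  rw [dirv_self] at h1
  have hq : p.1 = q.1 := by
    by_contra hne
    rw [show dirv d q p.1 = 0 by simp [dirv, hne]] at h1
    split at h1 <;> omega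
  have h2 : (if p.2 then (1:ℤ) else -1) = if q.2 then 1 else -1 := by
    rw [h1, hq, dirv_self]
  have h3 : p.2 = q.2 := by
    cases hp : p.2 <;> cases hq2 : q.2 <;> rw [hp, hq2] at h2 <;> first | rfl | (simp at h2)
  exact Prod.ext hq h3

lemma latAdj_decomp {d : ℕ} {a b : Fin d → ℤ} (h : latAdj d a b) :
    ∃ p : Fin d × Bool, b = a + dirv d p := by
  unfold latAdj at h
  have hne : ∃ i ∈ Finset.univ, |a i - b i| ≠ 0 :=
    Finset.exists_ne_zero_of_sum_ne_zero (by rw [h]; norm_num)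
  obtain ⟨i, -, hi⟩ := hne
  have hsum : |a i - b i| + ∑ j ∈ Finset.univ.erase i, |a j - b j| = 1 := by
    rw [Finset.add_sum_erase Finset.univ (fun j => |a j - b j|) (Finset.mem_univ i)]; exact h
  have hnn : (0:ℤ) ≤ ∑ j ∈ Finset.univ.erase i, |a j - b j| :=
    Finset.sum_nonneg fun j _ => abs_nonneg _
  have h1 : (1:ℤ) ≤ |a i - b i| := (lt_of_le_of_ne (abs_nonneg _) (Ne.symm hi))
  have habs : |a i - b i| = 1 := le_antisymm (by omega) h1
  have hzero : ∑ j ∈ Finset.univ.erase i, |a j - b j| = 0 := by omega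
  have hrest : ∀ j, j ≠ i → a j = b j := by
    intro j hj
    have := (Finset.sum_eq_zero_iff_of_nonneg fun j _ => abs_nonneg (a j - b j)).mp hzero j
      (by simp [hj])
    have := abs_eq_zero.mp this
    omega
  have hcase : a i - b i = 1 ∨ a i - b i = -1 := abs_eq (by norm_num) |>.mp habs
  rcases hcase with hc | hc
  · refine ⟨(i, false), funext fun j => ?_⟩
    by_cases hj : j = i
    · subst hj; simp [dirv]; omega
    · simp [dirv, hj, hrest j hj]
  · refine ⟨(i, true), funext fun j => ?_⟩
    by_cases hj : j = i
    · subst hj; simp [dirv]; omega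
    · simp [dirv, hj, hrest j hj]

/-- for an odd minimal edge cutset `Γ` in `ℤ^d` with sides `A₁` and
`A₀ = A₁ᶜ`, if `{v, w} ∈ Γ` with `v ∈ A₁`, `w ∈ A₀`, then
`P_Γ(v) + P_Γ(w) ≥ 2d`. -/
theorem PGamma_sum_ge (d : ℕ) (hd : 1 ≤ d) (A₁ : Set (Fin d → ℤ))
    (Γ : Set (Sym2 (Fin d → ℤ)))
    (hΓ : ∀ e ∈ Γ, ∃ a b, e = s(a, b) ∧ latAdj d a b ∧ a ∈ A₁ ∧ b ∉ A₁)
    (hcross : ∀ a b, latAdj d a b → a ∈ A₁ → b ∉ A₁ → s(a, b) ∈ Γ)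
    (hNA1 : ∀ u ∈ A₁, (∃ e ∈ Γ, u ∈ e) →
      ∀ u', latAdj d u u' → u' ∈ A₁ → ∀ z, latAdj d u' z → z ∈ A₁)
    (hNA0 : ∀ u ∉ A₁, (∃ e ∈ Γ, u ∈ e) →
      ∀ u', latAdj d u u' → u' ∉ A₁ → ∀ z, latAdj d u' z → z ∉ A₁)
    (v w : Fin d → ℤ) (hvw : s(v, w) ∈ Γ) (hv : v ∈ A₁) (hw : w ∉ A₁) :
    2 * d ≤ {e ∈ Γ | v ∈ e}.ncard + {e ∈ Γ | w ∈ e}.ncard := by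
  -- v and w are adjacent
  have hadjvw : latAdj d v w := by
    obtain ⟨a, b, he, hadj, ha, hb⟩ := hΓ _ hvw
    rcases Sym2.eq_iff.mp he with ⟨h1, h2⟩ | ⟨h1, h2⟩
    · rw [h1, h2]; exact hadj
    · exact absurd (h2 ▸ ha) hw
  set S1 := {e ∈ Γ | v ∈ e} with hS1
  set S2 := {e ∈ Γ | w ∈ e} with hS2
  set f1 : Fin d × Bool → Sym2 (Fin d → ℤ) := fun p => s(v, v + dirv d p) with hf1
  set f2 : Fin d × Bool → Sym2 (Fin d → ℤ) := fun p => s(w + dirv d p, w) with hf2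
  -- finiteness
  have hS1fin : S1.Finite := by
    refine (Set.finite_range f1).subset fun e he => ?_
    obtain ⟨heΓ, hve⟩ := he
    obtain ⟨a, b, he, hadj, -, -⟩ := hΓ _ heΓ
    rw [he] at hve ⊢
    rcases Sym2.mem_iff.mp hve with h | h
    · obtain ⟨p, hp⟩ := latAdj_decomp (h ▸ hadj)
      exact ⟨p, by show s(v, v + dirv d p) = s(a, b); rw [← hp, h]⟩
    · obtain ⟨p, hp⟩ := latAdj_decomp (latAdj_symm (h ▸ hadj))
      exact ⟨p, by show s(v, v + dirv d p) = s(a, b); rw [← hp, h, Sym2.eq_swap]⟩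
  have hS2fin : S2.Finite := by
    refine (Set.finite_range f2).subset fun e he => ?_
    obtain ⟨heΓ, hve⟩ := he
    obtain ⟨a, b, he, hadj, -, -⟩ := hΓ _ heΓ
    rw [he] at hve ⊢
    rcases Sym2.mem_iff.mp hve with h | h
    · obtain ⟨p, hp⟩ := latAdj_decomp (h ▸ hadj)
      exact ⟨p, by show s(w + dirv d p, w) = s(a, b); rw [← hp, h, Sym2.eq_swap]⟩
    · obtain ⟨p, hp⟩ := latAdj_decomp (latAdj_symm (h ▸ hadj))
      exact ⟨p, by show s(w + dirv d p, w) = s(a, b); rw [← hp, h]⟩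
  -- the two key maps are injective
  have hinj1 : Function.Injective f1 := by
    intro p q h
    rcases Sym2.eq_iff.mp h with ⟨-, h2⟩ | ⟨h1, h2⟩
    · exact dirv_injective d (add_left_cancel h2)
    · exact absurd h2 (add_dirv_ne d v p)
  have hinj2 : Function.Injective f2 := by
    intro p q h
    rcases Sym2.eq_iff.mp h with ⟨h1, -⟩ | ⟨h1, h2⟩
    · exact dirv_injective d (add_left_cancel h1)
    · exact absurd h1 (add_dirv_ne d w p)
  set T1 : Set (Fin d × Bool) := {p | f1 p ∈ Γ} with hT1
  -- main dichotomy
  have hmain : ∀ p ∈ T1ᶜ, f2 p ∈ S2 := by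
    intro p hp
    have h1 : v + dirv d p ∈ A₁ := by
      by_contra hmem
      exact hp (hcross v (v + dirv d p) (latAdj_add_dirv d v p) hv hmem)
    have h2 : w + dirv d p ∈ A₁ :=
      hNA1 v hv ⟨s(v, w), hvw, Sym2.mem_mk_left v w⟩ (v + dirv d p)
        (latAdj_add_dirv d v p) h1 (w + dirv d p) (latAdj_translate (dirv d p) hadjvw)
    exact ⟨hcross (w + dirv d p) w (latAdj_symm (latAdj_add_dirv d w p)) h2 hw,
      Sym2.mem_mk_right _ w⟩
  have hsub1 : f1 '' T1 ⊆ S1 := by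
    rintro _ ⟨p, hp, rfl⟩
    exact ⟨hp, Sym2.mem_mk_left v _⟩
  have hsub2 : f2 '' T1ᶜ ⊆ S2 := by
    rintro _ ⟨p, hp, rfl⟩
    exact hmain p hp
  have hc1 : T1.ncard ≤ S1.ncard := by
    rw [← Set.ncard_image_of_injective T1 hinj1]
    exact Set.ncard_le_ncard hsub1 hS1fin
  have hc2 : T1ᶜ.ncard ≤ S2.ncard := by
    rw [← Set.ncard_image_of_injective T1ᶜ hinj2]
    exact Set.ncard_le_ncard hsub2 hS2fin
  have htot : T1.ncard + T1ᶜ.ncard = 2 * d := by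
    rw [Set.ncard_add_ncard_compl]
    simp [Nat.card_eq_fintype_card]
    ring
  omega
end

section
/- Let $\Gamma$ be an odd minimal edge cutset in the box graph $G_n$ ($n \geq 2$) of $\mathbb{Z}^d$ ($d \geq 2$) separating a fixed even vertex $x$ from the boundary $B_n$. Then $|\Gamma| \geq 2d(2d-1)$. -/
/-- Membership in the box `[-n, n]^d`. -/
def inBox (d n : ℕ) (v : Fin d → ℤ) : Prop := ∀ i, |v i| ≤ (n : ℤ)

/-- Membership in the boundary `B_n = [-n,n]^d \ [-(n-1),n-1]^d`. -/
def onBoundary (d n : ℕ) (v : Fin d → ℤ) : Prop :=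
  inBox d n v ∧ ∃ i, |v i| = (n : ℤ)

/-- A walk of length `k` inside the box avoiding a set of edges `Γ`. -/
def IsAvoidingWalk (d n : ℕ) (Γ : Set (Sym2 (Fin d → ℤ))) (k : ℕ)
    (p : ℕ → Fin d → ℤ) : Prop :=
  (∀ i ≤ k, inBox d n (p i)) ∧ (∀ i < k, latAdj d (p i) (p (i + 1))) ∧
    (∀ i < k, s(p i, p (i + 1)) ∉ Γ)

lemma Set.Finite.sym2 {α : Type*} {s : Set α} (hs : s.Finite) : s.sym2.Finite := by
  rw [Set.sym2_eq_mk_image]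
  exact (hs.prod hs).image _

namespace OddCutset

variable {d : ℕ}

def unitVec (u : Fin d × ℤˣ) : Fin d → ℤ := Pi.single u.1 (u.2 : ℤ)

@[simp] lemma unitVec_mk_self (i : Fin d) (σ : ℤˣ) : unitVec (i, σ) i = σ := Pi.single_eq_same _ _

lemma unitVec_mk_of_ne {i j : Fin d} (σ : ℤˣ) (h : j ≠ i) : unitVec (i, σ) j = 0 :=
  Pi.single_eq_of_ne h _

lemma abs_unitVec_le (u : Fin d × ℤˣ) (j : Fin d) : |unitVec u j| ≤ 1 := by
  obtain ⟨i, σ⟩ := u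
  by_cases h : j = i
  · simp [h, Int.isUnit_iff_abs_eq.1 σ.isUnit]
  · simp [unitVec_mk_of_ne σ h]

lemma sum_abs_unitVec (u : Fin d × ℤˣ) : ∑ i, |unitVec u i| = 1 := by
  simp [unitVec, Pi.single_apply, apply_ite, Int.isUnit_iff_abs_eq.1 u.2.isUnit]

lemma eq_of_unitVec_apply_eq {u : Fin d × ℤˣ} {j : Fin d} {σ : ℤˣ} (h : unitVec u j = σ) :
    u = (j, σ) := by
  obtain ⟨i, τ⟩ := u
  by_cases hj : j = i
  · subst hj
    rw [unitVec_mk_self, Units.val_inj] at h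
    rw [h]
  · rw [unitVec_mk_of_ne τ hj] at h
    exact absurd h.symm σ.ne_zero

lemma unitVec_injective : Function.Injective (unitVec (d := d)) := fun u _ h =>
  (eq_of_unitVec_apply_eq ((congrFun h u.1).symm.trans (unitVec_mk_self u.1 u.2))).symm

lemma eq_of_unitVec_sub_unitVec_eq_smul {a b w : Fin d × ℤˣ} {c : ℤ}
    (h : unitVec a - unitVec b = c • unitVec w) (hc : 0 < c) : a = w := by
  obtain ⟨i, σ⟩ := a; obtain ⟨k, ρ⟩ := w
  have hi := congrFun h i
  simp only [Pi.sub_apply, Pi.smul_apply, smul_eq_mul, unitVec_mk_self] at hi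
  by_cases hik : i = k
  · subst hik
    have hb := abs_le.1 (abs_unitVec_le b i)
    rw [unitVec_mk_self] at hi
    rcases Int.units_eq_one_or σ with rfl | rfl <;> rcases Int.units_eq_one_or ρ with rfl | rfl <;>
      first | rfl | (push_cast at hi; omega)
  · rw [unitVec_mk_of_ne ρ hik, mul_zero, sub_eq_zero] at hi
    rw [eq_of_unitVec_apply_eq hi.symm, sub_self] at h
    have hk := congrFun h k
    simp [hc.ne'] at hk

lemma latAdj_add_unitVec (v : Fin d → ℤ) (u : Fin d × ℤˣ) : latAdj d v (v + unitVec u) := by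
  simp [latAdj, sum_abs_unitVec]

lemma latAdj_sub_unitVec (v : Fin d → ℤ) (u : Fin d × ℤˣ) : latAdj d v (v - unitVec u) := by
  simp [latAdj, sum_abs_unitVec]

variable {n : ℕ}

lemma exists_walk_along_unitVec_to_boundary {y : Fin d → ℤ} (hy : inBox d n y) (w : Fin d × ℤˣ) :
    ∃ m : ℕ, (∀ t ≤ m, inBox d n (y + (t : ℤ) • unitVec w)) ∧
      onBoundary d n (y + (m : ℤ) • unitVec w) := by
  obtain ⟨j, σ⟩ := w
  have hyj := abs_le.1 (hy j)
  have hcoord : ∀ t : ℤ, (y + t • unitVec (j, σ)) j = y j + t * σ := by simp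
  have hother : ∀ t : ℤ, ∀ i ≠ j, (y + t • unitVec (j, σ)) i = y i := by
    simp +contextual [unitVec_mk_of_ne]
  -- the walk leaves the box through the face `σ * v j = n`, after `m = n - σ * y j` steps
  set m : ℕ := ((n : ℤ) - σ * y j).toNat with hm
  have hmσ : (σ : ℤ) * y j + m = n := by
    rcases Int.units_eq_one_or σ with rfl | rfl <;> simp [hm] <;> omega
  have hbox : ∀ t ≤ m, inBox d n (y + (t : ℤ) • unitVec (j, σ)) := by
    intro t ht i
    by_cases hij : i = j
    · subst hij
      rw [hcoord, abs_le]
      rcases Int.units_eq_one_or σ with rfl | rfl <;> push_cast at hmσ ⊢ <;> omega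
    · rw [hother _ i hij]; exact hy i
  refine ⟨m, hbox, hbox m le_rfl, j, ?_⟩
  rw [hcoord, abs_eq (by omega)]
  rcases Int.units_eq_one_or σ with rfl | rfl <;> push_cast at hmσ ⊢ <;> omega

lemma inBox_sub_unitVec {x : Fin d → ℤ} (hx : ∀ i, |x i| < n) (u : Fin d × ℤˣ) :
    inBox d n (x - unitVec u) := fun i => by
  have := abs_sub (x i) (unitVec u i)
  have := abs_unitVec_le u i
  have := hx i
  simp only [Pi.sub_apply]
  omega

def IsSeparating (d n : ℕ) (x : Fin d → ℤ) (Γ : Set (Sym2 (Fin d → ℤ))) : Prop :=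
  ∀ (k : ℕ) (p : ℕ → Fin d → ℤ), p 0 = x → onBoundary d n (p k) →
    (∀ i ≤ k, inBox d n (p i)) → (∀ i < k, latAdj d (p i) (p (i + 1))) →
    ∃ i < k, s(p i, p (i + 1)) ∈ Γ

def turnWalk (x : Fin d → ℤ) (u w : Fin d × ℤˣ) : ℕ → Fin d → ℤ
  | 0 => x
  | t + 1 => x - unitVec u + (t : ℤ) • unitVec w

def turnEdge (x : Fin d → ℤ) (u w : Fin d × ℤˣ) (t : ℕ) : Sym2 (Fin d → ℤ) :=
  s(turnWalk x u w (t + 1), turnWalk x u w (t + 2))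

lemma turnWalk_latAdj (x : Fin d → ℤ) (u w : Fin d × ℤˣ) (t : ℕ) :
    latAdj d (turnWalk x u w t) (turnWalk x u w (t + 1)) := by
  cases t with
  | zero => simpa [turnWalk] using latAdj_sub_unitVec x u
  | succ t =>
    simp only [turnWalk]
    push_cast
    rw [add_smul, one_smul, ← add_assoc]
    exact latAdj_add_unitVec _ _

lemma exists_turnEdge_mem {x : Fin d → ℤ} {Γ : Set (Sym2 (Fin d → ℤ))} (hx : ∀ i, |x i| < n)
    (hsep : IsSeparating d n x Γ) (hxΓ : ∀ e ∈ Γ, x ∉ e) (u w : Fin d × ℤˣ) :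
    ∃ t, turnEdge x u w t ∈ Γ := by
  obtain ⟨m, hbox, hbd⟩ := exists_walk_along_unitVec_to_boundary (inBox_sub_unitVec hx u) w
  have hwalk_box : ∀ i ≤ m + 1, inBox d n (turnWalk x u w i) := by
    rintro (_ | t) ht
    · exact fun i => (hx i).le
    · exact hbox t (by omega)
  obtain ⟨_ | t, -, hΓ⟩ := hsep (m + 1) (turnWalk x u w) rfl hbd hwalk_box
    fun i _ => turnWalk_latAdj x u w i
  · exact absurd (Sym2.mem_mk_left _ _) (hxΓ _ hΓ)
  · exact ⟨t, hΓ⟩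

lemma eq_of_turnEdge_eq {x : Fin d → ℤ} {u w u' w' : Fin d × ℤˣ} {t t' : ℕ} (hu : u ≠ w)
    (hu' : u' ≠ w') (h : turnEdge x u w t = turnEdge x u' w' t') : (u, w) = (u', w') := by
  simp only [turnEdge, turnWalk, Sym2.eq_iff] at h
  push_cast at h
  rcases h with ⟨hA, hB⟩ | ⟨hA, hB⟩
  · have hw : w = w' := unitVec_injective (by linear_combination (norm := module) hB - hA)
    subst hw
    rcases lt_trichotomy t t' with htt | rfl | htt
    · exact absurd (eq_of_unitVec_sub_unitVec_eq_smul (a := u') (b := u) (c := t' - t)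
        (by linear_combination (norm := module) hA) (by omega)) hu'
    · have : u = u' := unitVec_injective (by linear_combination (norm := module) -hA)
      rw [this]
    · exact absurd (eq_of_unitVec_sub_unitVec_eq_smul (a := u) (b := u') (c := t - t')
        (by linear_combination (norm := module) -hA) (by omega)) hu
  · have hw : unitVec w' = - unitVec w := by linear_combination (norm := module) hB - hA
    exact absurd (eq_of_unitVec_sub_unitVec_eq_smul (a := u) (b := u') (c := t + t' + 1)
        (by linear_combination (norm := module) -hA - ((t' : ℤ) + 1) • hw) (by omega)) hu

lemma finite_setOf_inBox : {v : Fin d → ℤ | inBox d n v}.Finite :=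
  (Set.finite_Icc (fun _ => -(n : ℤ)) fun _ => n).subset fun _ hv =>
    ⟨fun i => (abs_le.1 (hv i)).1, fun i => (abs_le.1 (hv i)).2⟩

lemma ncard_offDiag_directions :
    ((Finset.univ.offDiag : Finset ((Fin d × ℤˣ) × (Fin d × ℤˣ))) :
      Set ((Fin d × ℤˣ) × (Fin d × ℤˣ))).ncard = 2 * d * (2 * d - 1) := by
  rw [Set.ncard_coe_finset, Finset.offDiag_card, Finset.card_univ, Fintype.card_prod,
    Fintype.card_fin, Fintype.card_units_int, Nat.mul_sub, mul_one, mul_comm d 2]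

end OddCutset

theorem omcut_size_lower_bound_general (d n : ℕ)
    (x : Fin d → ℤ) (hx : inBox d n x) (hxB : ¬ onBoundary d n x)
    (hxeven : Even (∑ i, x i))
    (Γ : Set (Sym2 (Fin d → ℤ)))
    (hedges : ∀ e ∈ Γ, ∃ a b, e = s(a, b) ∧ latAdj d a b ∧ inBox d n a ∧ inBox d n b)
    (hsep : ∀ (k : ℕ) (p : ℕ → Fin d → ℤ), p 0 = x → onBoundary d n (p k) →
      (∀ i ≤ k, inBox d n (p i)) → (∀ i < k, latAdj d (p i) (p (i + 1))) →
      ∃ i < k, s(p i, p (i + 1)) ∈ Γ)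
    (hodd : ∀ v, (∃ (k : ℕ) (p : ℕ → Fin d → ℤ),
        IsAvoidingWalk d n Γ k p ∧ p 0 = x ∧ p k = v) →
      (∃ e ∈ Γ, v ∈ e) → Odd (∑ i, v i)) :
    2 * d * (2 * d - 1) ≤ Γ.ncard := by
  have hxint : ∀ i, |x i| < n := fun i => (hx i).lt_of_ne fun h => hxB ⟨hx, i, h⟩
  have hxΓ : ∀ e ∈ Γ, x ∉ e := fun e he hxe => Int.not_odd_iff_even.2 hxeven <|
    hodd x ⟨0, fun _ => x, ⟨fun _ _ => hx, by simp, by simp⟩, rfl, rfl⟩ ⟨e, he, hxe⟩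
  have hΓfin : Γ.Finite := OddCutset.finite_setOf_inBox.sym2.subset fun e he => by
    obtain ⟨a, b, rfl, -, ha, hb⟩ := hedges e he
    exact ⟨ha, hb⟩
  choose t ht using OddCutset.exists_turnEdge_mem hxint hsep hxΓ
  rw [← OddCutset.ncard_offDiag_directions]
  exact Set.ncard_le_ncard_of_injOn (fun p => OddCutset.turnEdge x p.1 p.2 (t p.1 p.2))
    (fun p _ => ht p.1 p.2)
    (fun p hp q hq h =>
      OddCutset.eq_of_turnEdge_eq (Finset.mem_offDiag.1 hp).2.2 (Finset.mem_offDiag.1 hq).2.2 h)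
    hΓfin

/-- every odd minimal edge cutset `Γ` in `G_n` separating an even
vertex `x` from the boundary `B_n` has at least `2d(2d-1)` edges. -/
theorem omcut_size_lower_bound (d n : ℕ) (hd : 2 ≤ d) (hn : 2 ≤ n)
    (x : Fin d → ℤ) (hx : inBox d n x) (hxB : ¬ onBoundary d n x)
    (hxeven : Even (∑ i, x i))
    (Γ : Set (Sym2 (Fin d → ℤ)))
    (hedges : ∀ e ∈ Γ, ∃ a b, e = s(a, b) ∧ latAdj d a b ∧ inBox d n a ∧ inBox d n b)
    (hsep : ∀ (k : ℕ) (p : ℕ → Fin d → ℤ), p 0 = x → onBoundary d n (p k) →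
      (∀ i ≤ k, inBox d n (p i)) → (∀ i < k, latAdj d (p i) (p (i + 1))) →
      ∃ i < k, s(p i, p (i + 1)) ∈ Γ)
    (hmin : ∀ e ∈ Γ, ∃ (k : ℕ) (p : ℕ → Fin d → ℤ), p 0 = x ∧ onBoundary d n (p k) ∧
      (∀ i ≤ k, inBox d n (p i)) ∧ (∀ i < k, latAdj d (p i) (p (i + 1))) ∧
      (∀ i < k, s(p i, p (i + 1)) ∈ Γ → s(p i, p (i + 1)) = e))
    (hodd : ∀ v, (∃ (k : ℕ) (p : ℕ → Fin d → ℤ),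
        IsAvoidingWalk d n Γ k p ∧ p 0 = x ∧ p k = v) →
      (∃ e ∈ Γ, v ∈ e) → Odd (∑ i, v i)) :
    2 * d * (2 * d - 1) ≤ Γ.ncard :=
  omcut_size_lower_bound_general d n x hx hxB hxeven Γ hedges hsep hodd
end

section
/- Let $\Gamma$ be an odd minimal edge cutset in $\mathbb{Z}^d$ with components $A_0, A_1$ where all boundary vertices of $A_1$ (vertices in $A_1$ incident to an edge of $\Gamma$) are odd. Let $\delta \in \{0,1\}$, let $v$ be a vertex of $A_\delta$ incident to an edge of $\Gamma$, and let $f_j$ be a unit vector with $v + f_j \in A_\delta$. Then all $2d$ neighbors of $v + f_j$ lie in $A_\delta$. -/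
lemma latAdj_parity {d : ℕ} {a b : Fin d → ℤ} (h : latAdj d a b) :
    (∑ i, a i) % 2 ≠ (∑ i, b i) % 2 := by
  have key : (∑ i, (a i - b i)) % 2 = (∑ i, |a i - b i|) % 2 := by
    rw [Finset.sum_int_mod, Finset.sum_int_mod (f := fun i => |a i - b i|)]
    congr 1
    refine Finset.sum_congr rfl (fun i _ => ?_)
    rcases abs_cases (a i - b i) with ⟨h1, _⟩ | ⟨h1, _⟩ <;> omega
  rw [Finset.sum_sub_distrib, h] at key
  omega

/-- for an odd cutset with sides `A₁` and `A₀ = A₁ᶜ` (so the cutset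
edges are exactly the crossing edges, and every vertex of `A₁` incident to the
cutset is odd), if `v ∈ A_δ` is incident to a cutset edge and `v + f_j ∈ A_δ`,
then all neighbors of `v + f_j` lie in `A_δ`. Here `S` ranges over the two
sides `A₁` and `A₁ᶜ`. -/
theorem neighbors_stay_inside (d : ℕ) (hd : 1 ≤ d) (A₁ : Set (Fin d → ℤ))
    (hodd : ∀ v ∈ A₁, (∃ w, latAdj d v w ∧ w ∉ A₁) → Odd (∑ i, v i))
    (S : Set (Fin d → ℤ)) (hS : S = A₁ ∨ S = A₁ᶜ)
    (v : Fin d → ℤ) (hv : v ∈ S) (hinc : ∃ w, latAdj d v w ∧ w ∉ S)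
    (f : Fin d → ℤ) (hf : ∑ i, |f i| = 1) (hvf : v + f ∈ S) :
    ∀ z, latAdj d (v + f) z → z ∈ S := by
  intro z hz
  by_contra hzS
  have hadj_vf : latAdj d v (v + f) := by
    unfold latAdj
    simpa using hf
  have hp1 := latAdj_parity hadj_vf
  have hp2 := latAdj_parity hz
  obtain ⟨w, hw, hwn⟩ := hinc
  rcases hS with rfl | rfl
  · have h1 : Odd (∑ i, v i) := hodd v hv ⟨w, hw, hwn⟩
    have h2 : Odd (∑ i, (v + f) i) := hodd (v + f) hvf ⟨z, hz, hzS⟩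
    rw [Int.odd_iff] at h1 h2
    exact hp1 (h1.trans h2.symm)
  · have hwA : w ∈ A₁ := not_not.mp hwn
    have h1 : Odd (∑ i, w i) := hodd w hwA ⟨v, latAdj_symm hw, hv⟩
    have hzA : z ∈ A₁ := not_not.mp hzS
    have h2 : Odd (∑ i, z i) := hodd z hzA ⟨v + f, latAdj_symm hz, hvf⟩
    have hp3 := latAdj_parity hw
    rw [Int.odd_iff] at h1 h2
    omega
end

section
/- Let $d \geq 1$ and let $E$ be a finite set with $|E| \leq R$ for an integer $R \geq 0$. The number of functions $\nu \colon E \to \{0,1\}^{2d}$ such that $\sum_{v \in E} \min\{|\nu(v)|, 2d - |\nu(v)|\} = R$ and $1 \leq |\nu(v)| \leq 2d-1$ for all $v$ (where $|\nu(v)|$ denotes the number of coordinates of $\nu(v)$ equal to 1) is at most $(2d)^{2R}$. -/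
/-!
Group the patterns `ν` by their degree sequence `v ↦ |ν v|`, which lies in `[1, 2d - 1]^E`, so
at most `(2d)^|E| ≤ (2d)^R` degree sequences occur. The patterns with a given degree sequence `D`
number `∏ v, (2d).choose (D v)`, and `n.choose k ≤ n ^ min k (n - k)` bounds this product by
`(2d) ^ ∑ v, min (D v) (2d - D v) = (2d)^R`.
-/

open Finset

theorem Nat.choose_le_pow_min {n k : ℕ} (hk : k ≤ n) : n.choose k ≤ n ^ min k (n - k) := by
  rcases le_total k (n - k) with h | h
  · rw [min_eq_left h]
    exact n.choose_le_pow k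
  · rw [min_eq_right h, ← Nat.choose_symm hk]
    exact n.choose_le_pow (n - k)

namespace BoolPattern

variable {α E : Type*} [Fintype α] [Fintype E]

def weight (f : α → Bool) : ℕ := #{i | f i = true}

theorem weight_le_card (f : α → Bool) : weight f ≤ Fintype.card α :=
  card_filter_le _ _

section

variable [DecidableEq α] [DecidableEq E]

theorem card_filter_weight_eq (k : ℕ) :
    #{f : α → Bool | weight f = k} = (Fintype.card α).choose k := by
  rw [← card_univ, ← card_powersetCard]
  refine card_nbij' (fun f => ({i | f i = true} : Finset α)) (fun s i => decide (i ∈ s))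
    ?_ ?_ ?_ ?_
  · intro f hf
    rw [mem_coe, mem_filter_univ] at hf
    rwa [mem_coe, mem_powersetCard, and_iff_right (subset_univ _)]
  · intro s hs
    rw [mem_coe, mem_powersetCard] at hs
    rw [mem_coe, mem_filter_univ]
    simpa [weight] using hs.2
  · intro f _
    funext i
    simp
  · intro s _
    ext i
    simp

theorem card_filter_forall_weight_eq (D : E → ℕ) :
    #{ν : E → α → Bool | ∀ v, weight (ν v) = D v} =
      ∏ v, (Fintype.card α).choose (D v) := by
  have hpi : ({ν : E → α → Bool | ∀ v, weight (ν v) = D v} : Finset _) =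
      Fintype.piFinset fun v => {f : α → Bool | weight f = D v} := by
    ext ν
    simp
  simp only [hpi, Fintype.card_piFinset, card_filter_weight_eq]

theorem card_filter_forall_weight_eq_le (D : E → ℕ) (hD : ∀ v, D v ≤ Fintype.card α) :
    #{ν : E → α → Bool | ∀ v, weight (ν v) = D v} ≤
      Fintype.card α ^ ∑ v, min (D v) (Fintype.card α - D v) := by
  rw [card_filter_forall_weight_eq, ← prod_pow_eq_pow_sum]
  exact prod_le_prod' fun v _ => Nat.choose_le_pow_min (hD v)

end

theorem ncard_patterns_le (R : ℕ) :
    {ν : E → α → Bool |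
        ∑ v, min (weight (ν v)) (Fintype.card α - weight (ν v)) = R ∧
        ∀ v, 1 ≤ weight (ν v) ∧ weight (ν v) ≤ Fintype.card α - 1}.ncard ≤
      Fintype.card α ^ R * (Fintype.card α - 1) ^ Fintype.card E := by
  classical
  set n := Fintype.card α
  rw [Set.ncard_eq_toFinset_card', Set.toFinset_ofPred]
  refine (card_le_mul_card_image (f := fun ν v => weight (ν v)) _ (n ^ R) fun D hD => ?_).trans ?_
  · obtain ⟨ν₀, hν₀, rfl⟩ := mem_image.mp hD
    rw [mem_filter_univ] at hν₀
    calc _ ≤ #{ν : E → α → Bool | ∀ v, weight (ν v) = weight (ν₀ v)} :=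
          card_le_card fun ν hν => by simpa [funext_iff] using (mem_filter.mp hν).2
      _ ≤ n ^ R := hν₀.1 ▸ card_filter_forall_weight_eq_le _ fun v => weight_le_card _
  · refine Nat.mul_le_mul_left _ ?_
    calc _ ≤ #(Fintype.piFinset fun _ : E => Icc 1 (n - 1)) :=
          card_le_card <| image_subset_iff.mpr fun ν hν => by
            rw [mem_filter_univ] at hν
            simpa using hν.2
      _ = (n - 1) ^ Fintype.card E := by simp

end BoolPattern

open Classical in
/-- the number of neighborhood-pattern assignments
`ν : E → {0,1}^{2d}` with `1 ≤ |ν(v)| ≤ 2d - 1` for all `v` and total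
regularity `∑_v min{|ν(v)|, 2d - |ν(v)|} = R` is at most `(2d)^{2R}`,
whenever `|E| ≤ R`. -/
theorem count_patterns (d R : ℕ) (hd : 1 ≤ d) (E : Type*) [Fintype E]
    (hE : Fintype.card E ≤ R) :
    {ν : E → (Fin (2 * d) → Bool) |
        (∑ v : E, min ((Finset.univ.filter (fun i => ν v i = true)).card)
            (2 * d - (Finset.univ.filter (fun i => ν v i = true)).card)) = R ∧
        ∀ v : E, 1 ≤ (Finset.univ.filter (fun i => ν v i = true)).card ∧
          (Finset.univ.filter (fun i => ν v i = true)).card ≤ 2 * d - 1}.ncard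
      ≤ (2 * d) ^ (2 * R) := by
  calc _ ≤ (2 * d) ^ R * (2 * d - 1) ^ Fintype.card E := by
        have h := BoolPattern.ncard_patterns_le (α := Fin (2 * d)) (E := E) R
        rw [Fintype.card_fin] at h
        exact h
    _ ≤ (2 * d) ^ R * (2 * d) ^ R := by
        refine Nat.mul_le_mul_left _ ?_
        calc (2 * d - 1) ^ Fintype.card E ≤ (2 * d) ^ Fintype.card E := by gcongr; omega
          _ ≤ (2 * d) ^ R := Nat.pow_le_pow_right (by omega) hE
    _ = (2 * d) ^ (2 * R) := by ring
end
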